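/- Involution criterion from triangular recursion relations: let n ≥ 1, let U ⊆ ℝ^{2n} be open, let N : U → Mat_{2n×2n}(ℝ) be a smooth matrix-valued map such that N(x) P0 is skew-symmetric for every x ∈ U, where P0 = [[0,I],[−I,0]] is the canonical symplectic matrix. Let H_1,…,H_n : U → ℝ be smooth functions and ρ_ij : U → ℝ (1 ≤ j ≤ i ≤ n) smooth functions with ρ_11 = 1 and ρ_ii nowhere vanishing for i = 2,…,n, and suppose that for every i = 1,…,n and every x ∈ U the recursion relations (N(x)ᵀ)^{i−1} ∇H_1(x) = Σ_{j=1}^{i} ρ_ij(x) ∇H_j(x) hold. Then the functions H_1,…,H_n are pairwise in involution with respect to the canonical Poisson bracket: ∇H_i(x)ᵀ P0 ∇H_j(x) = 0 for all i,j and all x ∈ U. -/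
import Mathlib


/- STATEMENT 19: involution criterion from triangular recursion relations.
ℝ^{2n} is modelled as `Fin n ⊕ Fin n → ℝ`, with the first block the q's and the
second block the p's; the functions H_1,…,H_n are indexed by `Fin n` (so the
index `0` corresponds to H_1). -/

noncomputable section

open Matrix Finset

/-- partial derivative in the `j`-th coordinate direction. -/
def pd {n : ℕ} (j : Fin n ⊕ Fin n) (f : (Fin n ⊕ Fin n → ℝ) → ℝ)
    (x : Fin n ⊕ Fin n → ℝ) : ℝ :=
  fderiv ℝ f x (Pi.single j 1)

/-- the gradient of `f` at `x`. -/
def grad {n : ℕ} (f : (Fin n ⊕ Fin n → ℝ) → ℝ) (x : Fin n ⊕ Fin n → ℝ) :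
    Fin n ⊕ Fin n → ℝ :=
  fun j => pd j f x

/-- the canonical symplectic matrix `P0 = [[0, I],[−I, 0]]`. -/
def P0 (n : ℕ) : Matrix (Fin n ⊕ Fin n) (Fin n ⊕ Fin n) ℝ :=
  Matrix.fromBlocks 0 1 (-1) 0

lemma sum_dotProduct' {α ι : Type*} [Fintype α] (s : Finset ι) (f : ι → α → ℝ)
    (z : α → ℝ) : (∑ j ∈ s, f j) ⬝ᵥ z = ∑ j ∈ s, f j ⬝ᵥ z := by
  simp only [dotProduct, Finset.sum_apply, Finset.sum_mul]
  exact Finset.sum_comm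

theorem involution_from_recursion_relations
    (n : ℕ) (hn : 1 ≤ n)
    (U : Set (Fin n ⊕ Fin n → ℝ)) (hU : IsOpen U)
    (N : (Fin n ⊕ Fin n → ℝ) → Matrix (Fin n ⊕ Fin n) (Fin n ⊕ Fin n) ℝ)
    (hNsmooth : ∀ a b, ContDiffOn ℝ (⊤ : ℕ∞) (fun x => N x a b) U)
    -- P1 := N P0 is skew-symmetric
    (hskew : ∀ x ∈ U, (N x * P0 n)ᵀ = -(N x * P0 n))
    (H : Fin n → (Fin n ⊕ Fin n → ℝ) → ℝ)
    (hHsmooth : ∀ i, ContDiffOn ℝ (⊤ : ℕ∞) (H i) U)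
    (ρ : Fin n → Fin n → (Fin n ⊕ Fin n → ℝ) → ℝ)
    (hρsmooth : ∀ i j, ContDiffOn ℝ (⊤ : ℕ∞) (ρ i j) U)
    (hρ11 : ∀ x ∈ U, ρ ⟨0, hn⟩ ⟨0, hn⟩ x = 1)
    (hρii : ∀ i : Fin n, i ≠ ⟨0, hn⟩ → ∀ x ∈ U, ρ i i x ≠ 0)
    -- the triangular recursion relations (Nᵀ)^{i−1} ∇H_1 = Σ_{j ≤ i} ρ_ij ∇H_j
    (hrec : ∀ i : Fin n, ∀ x ∈ U,
      ((N x)ᵀ ^ (i : ℕ)).mulVec (grad (H ⟨0, hn⟩) x) =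
        ∑ j ∈ univ.filter (fun j => j ≤ i), ρ i j x • grad (H j) x) :
    ∀ i j : Fin n, ∀ x ∈ U,
      grad (H i) x ⬝ᵥ (P0 n).mulVec (grad (H j) x) = 0 := by
  intro i j x hx
  set P := P0 n with hP
  set A := (N x)ᵀ with hA
  set g : Fin n → (Fin n ⊕ Fin n → ℝ) := fun k => grad (H k) x with hg
  set v : ℕ → (Fin n ⊕ Fin n → ℝ) := fun k => (A ^ k) *ᵥ g ⟨0, hn⟩ with hv
  -- P₀ᵀ = -P₀
  have hPT : Pᵀ = -P := by
    simp [hP, P0, Matrix.fromBlocks_transpose]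
    ext a b
    cases a <;> cases b <;> simp [Matrix.fromBlocks, Matrix.neg_apply]
  -- P₀ A = Aᵀ P₀
  have hcomm : P * A = N x * P := by
    have h := hskew x hx
    rw [Matrix.transpose_mul, hPT] at h
    have : -(P * A) = -(N x * P) := by
      simpa [hA, Matrix.neg_mul] using h
    exact neg_injective this
  -- skewness of the bilinear form B u w := u ⬝ᵥ P *ᵥ w
  have hskewB : ∀ u w : Fin n ⊕ Fin n → ℝ, u ⬝ᵥ P *ᵥ w = -(w ⬝ᵥ P *ᵥ u) := by
    intro u w
    rw [Matrix.dotProduct_mulVec, ← Matrix.mulVec_transpose, hPT]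
    simp [Matrix.neg_mulVec, dotProduct_comm]
  -- self-adjointness of A for B
  have hadj : ∀ u w : Fin n ⊕ Fin n → ℝ,
      (A *ᵥ u) ⬝ᵥ P *ᵥ w = u ⬝ᵥ P *ᵥ (A *ᵥ w) := by
    intro u w
    conv_rhs => rw [Matrix.mulVec_mulVec, hcomm, ← Matrix.mulVec_mulVec]
    conv_lhs => rw [hA, Matrix.mulVec_transpose, ← Matrix.dotProduct_mulVec]
  -- shift
  have hvsucc : ∀ k : ℕ, v (k + 1) = A *ᵥ v k := by
    intro k
    simp [hv, Matrix.mulVec_mulVec, pow_succ']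
  have hv0 : ∀ k l : ℕ, v k ⬝ᵥ P *ᵥ v l = v 0 ⬝ᵥ P *ᵥ v (k + l) := by
    intro k
    induction k with
    | zero => intro l; simp
    | succ m ih =>
      intro l
      rw [hvsucc m, hadj, ← hvsucc l, ih (l + 1)]
      ring_nf
  have hvv : ∀ k l : ℕ, v k ⬝ᵥ P *ᵥ v l = 0 := by
    intro k l
    have h1 := hv0 k l
    have h2 := hv0 l k
    have h3 := hskewB (v k) (v l)
    rw [Nat.add_comm l k] at h2
    linarith
  -- the diagonal coefficients are nonzero
  have hρne : ∀ i : Fin n, ρ i i x ≠ 0 := by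
    intro i
    by_cases h : i = ⟨0, hn⟩
    · subst h; rw [hρ11 x hx]; exact one_ne_zero
    · exact hρii i h x hx
  -- main lemma: if w is B-orthogonal to all v k, it is B-orthogonal to g i
  have main' : ∀ (m : ℕ) (i : Fin n), (i : ℕ) < m → ∀ w : Fin n ⊕ Fin n → ℝ,
      (∀ k : ℕ, v k ⬝ᵥ P *ᵥ w = 0) → g i ⬝ᵥ P *ᵥ w = 0 := by
    intro m
    induction m with
    | zero => intro i hi; exact absurd hi (Nat.not_lt_zero _)
    | succ m ihm =>
      intro i him w hw
      have ih : ∀ b : Fin n, b < i → ∀ w : Fin n ⊕ Fin n → ℝ,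
          (∀ k : ℕ, v k ⬝ᵥ P *ᵥ w = 0) → g b ⬝ᵥ P *ᵥ w = 0 := by
        intro b hb
        exact ihm b (lt_of_lt_of_le hb (Nat.lt_succ_iff.mp him))
      have hr := hrec i x hx
      have hdot := congrArg (fun u => u ⬝ᵥ P *ᵥ w) hr
      simp only [sum_dotProduct', smul_dotProduct] at hdot
      have hlhs : ((N x)ᵀ ^ (i : ℕ)) *ᵥ grad (H ⟨0, hn⟩) x ⬝ᵥ P *ᵥ w = 0 := by
        have : ((N x)ᵀ ^ (i : ℕ)) *ᵥ grad (H ⟨0, hn⟩) x = v (i : ℕ) := by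
          simp [hv, hA, hg]
        rw [this]; exact hw _
      rw [hlhs] at hdot
      have hsum : ∑ j ∈ univ.filter (fun j => j ≤ i), ρ i j x • (grad (H j) x ⬝ᵥ P *ᵥ w)
          = ρ i i x • (grad (H i) x ⬝ᵥ P *ᵥ w) := by
        apply Finset.sum_eq_single_of_mem
        · simp
        · intro b hb hbne
          have hble : b ≤ i := by simpa using hb
          have hblt : b < i := lt_of_le_of_ne hble hbne
          have : g b ⬝ᵥ P *ᵥ w = 0 := ih b hblt w hw
          simp only [hg] at this
          rw [this, smul_zero]
      rw [hsum] at hdot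
      have : ρ i i x * (g i ⬝ᵥ P *ᵥ w) = 0 := by
        simpa [hg, smul_eq_mul] using hdot.symm
      rcases mul_eq_zero.mp this with h | h
      · exact absurd h (hρne i)
      · exact h
  -- the v's are B-orthogonal to each g j
  have main : ∀ i : Fin n, ∀ w : Fin n ⊕ Fin n → ℝ,
      (∀ k : ℕ, v k ⬝ᵥ P *ᵥ w = 0) → g i ⬝ᵥ P *ᵥ w = 0 := fun i =>
    main' ((i : ℕ) + 1) i (Nat.lt_succ_self _)
  have hvg : ∀ (j : Fin n) (k : ℕ), v k ⬝ᵥ P *ᵥ g j = 0 := by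
    intro j k
    have h1 : g j ⬝ᵥ P *ᵥ v k = 0 := main j (v k) (fun m => hvv m k)
    rw [hskewB, h1, neg_zero]
  exact main i (g j) (fun k => hvg j k)

end
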